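/- arXiv:2303.17138 — 11 statements merged into one kernel-verified Lean document; each statement's English description precedes it below -/
import Mathlib

section
/- Let G be a connected finite simple graph with diameter 2 and maximum degree at most 3. Then G does not admit a barbell partition. -/
open SimpleGraph

/-- A barbell partition of a graph `G`: a partition of the vertex set into
`R`, `W1`, `W2` with `W1, W2` nonempty, no edges between `W1` and `W2`, and
every vertex of `R` has a number of neighbors in each `Wi` different from 1. -/
def IsBarbellPartition {V : Type*} (G : SimpleGraph V) (R W1 W2 : Set V) : Prop :=
  R ∪ W1 ∪ W2 = Set.univ ∧ Disjoint R W1 ∧ Disjoint R W2 ∧ Disjoint W1 W2 ∧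
  W1.Nonempty ∧ W2.Nonempty ∧
  (∀ w1 ∈ W1, ∀ w2 ∈ W2, ¬ G.Adj w1 w2) ∧
  (∀ v ∈ R, (G.neighborSet v ∩ W1).ncard ≠ 1 ∧ (G.neighborSet v ∩ W2).ncard ≠ 1)

/-- `G` admits a barbell partition. -/
def HasBarbellPartition {V : Type*} (G : SimpleGraph V) : Prop :=
  ∃ R W1 W2 : Set V, IsBarbellPartition G R W1 W2

/-- A fort of `G`: a nonempty vertex set `F` such that no vertex outside `F`
has exactly one neighbor in `F`. -/
def IsFort {V : Type*} (G : SimpleGraph V) (F : Set V) : Prop :=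
  F.Nonempty ∧ ∀ v ∉ F, (G.neighborSet v ∩ F).ncard ≠ 1

/-- A connected finite simple graph with diameter 2 and maximum degree at most 3
does not admit a barbell partition. -/
theorem no_barbell_of_diam_two_maxDegree_three {V : Type*} [Fintype V] (G : SimpleGraph V)
    (hconn : G.Connected) (hdiam : G.diam = 2)
    (hdeg : ∀ v : V, (G.neighborSet v).ncard ≤ 3) :
    ¬ HasBarbellPartition G := by
  classical
  rintro ⟨R, W1, W2, huniv, hRW1, hRW2, hW12, ⟨w1, hw1⟩, ⟨w2, hw2⟩, hnoadj, hR⟩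
  -- w1 ≠ w2, not adjacent
  have hne : w1 ≠ w2 := fun h => (hW12.ne_of_mem hw1 hw2) h
  have hnadj : ¬ G.Adj w1 w2 := hnoadj w1 hw1 w2 hw2
  -- dist w1 w2 ≤ 2
  have hntop : G.ediam ≠ ⊤ := ediam_ne_top_of_diam_ne_zero (by omega)
  have hle : G.dist w1 w2 ≤ 2 := hdiam ▸ dist_le_diam hntop
  have hpos : G.dist w1 w2 ≠ 0 := by
    intro h
    exact hne ((hconn w1 w2).dist_eq_zero_iff.mp h)
  have hne1 : G.dist w1 w2 ≠ 1 := by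
    intro h
    exact hnadj ((G.dist_eq_one_iff_adj).mp h)
  have hdist2 : G.dist w1 w2 = 2 := by omega
  obtain ⟨p, hp⟩ := hconn.exists_walk_length_eq_dist w1 w2
  rw [hdist2] at hp
  -- extract the middle vertex
  obtain ⟨v, hadj1, hadj2⟩ : ∃ v, G.Adj w1 v ∧ G.Adj v w2 := by
    cases p with
    | nil => simp at hp
    | cons h q =>
      cases q with
      | nil => simp at hp
      | cons h' q' =>
        cases q' with
        | nil => exact ⟨_, h, h'⟩
        | cons _ _ => simp [SimpleGraph.Walk.length_cons] at hp
  have hvW1 : v ∉ W1 := fun hv => hnoadj v hv w2 hw2 hadj2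
  have hvW2 : v ∉ W2 := fun hv => hnoadj w1 hw1 v hv hadj1
  have hvR : v ∈ R := by
    have : v ∈ R ∪ W1 ∪ W2 := huniv ▸ Set.mem_univ v
    rcases this with (h | h) | h
    · exact h
    · exact absurd h hvW1
    · exact absurd h hvW2
  obtain ⟨h1, h2⟩ := hR v hvR
  have hfin : (G.neighborSet v).Finite := Set.toFinite _
  have hn1 : 2 ≤ (G.neighborSet v ∩ W1).ncard := by
    have hne' : (G.neighborSet v ∩ W1).Nonempty := ⟨w1, hadj1.symm, hw1⟩
    have := Set.ncard_pos (hfin.inter_of_left _) |>.mpr hne'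
    omega
  have hn2 : 2 ≤ (G.neighborSet v ∩ W2).ncard := by
    have hne' : (G.neighborSet v ∩ W2).Nonempty := ⟨w2, hadj2, hw2⟩
    have := Set.ncard_pos (hfin.inter_of_left _) |>.mpr hne'
    omega
  have hdisj : Disjoint (G.neighborSet v ∩ W1) (G.neighborSet v ∩ W2) :=
    Disjoint.mono Set.inter_subset_right Set.inter_subset_right hW12
  have hsub : (G.neighborSet v ∩ W1) ∪ (G.neighborSet v ∩ W2) ⊆ G.neighborSet v := by
    rintro x (⟨hx, _⟩ | ⟨hx, _⟩) <;> exact hx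
  have hunion : ((G.neighborSet v ∩ W1) ∪ (G.neighborSet v ∩ W2)).ncard
      = (G.neighborSet v ∩ W1).ncard + (G.neighborSet v ∩ W2).ncard :=
    Set.ncard_union_eq hdisj (hfin.inter_of_left _) (hfin.inter_of_left _)
  have hle' := Set.ncard_le_ncard hsub hfin
  have := hdeg v
  omega
end

section
/- The Petersen graph does not admit a barbell partition. -/
open SimpleGraph

/-- The Petersen graph as the Kneser graph K(5,2): vertices are 2-element
subsets of a 5-element set, adjacent iff disjoint. -/
def petersenGraph : SimpleGraph {s : Finset (Fin 5) // s.card = 2} where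
  Adj x y := Disjoint x.1 y.1
  symm := ⟨fun _ _ h => h.symm⟩
  loopless := by
    constructor
    intro x h
    have h0 : x.1 = ∅ := (Finset.disjoint_self_iff_empty _).mp h
    have h2 := x.2
    rw [h0] at h2
    simp at h2

/-!
Let `w₁ ∈ W1` and `w₂ ∈ W2`. They are distinct and non-adjacent, so in the Petersen graph
(diameter 2) they have a common neighbour `u`. Since `u` sees both sides it lies in `R`, hence has
at least two neighbours in each of `W1` and `W2`, i.e. degree at least 4, whereas the Petersen
graph is cubic.
-/

theorem Set.Nonempty.two_le_encard_of_ncard_ne_one {α : Type*} {s : Set α} (hs : s.Nonempty)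
    (h : s.ncard ≠ 1) : 2 ≤ s.encard :=
  Order.add_one_le_of_lt <| Set.one_lt_encard_iff_nontrivial.2 <|
    hs.exists_eq_singleton_or_nontrivial.resolve_left (by rintro ⟨a, rfl⟩; simp at h)

namespace IsBarbellPartition

variable {V : Type*} {G : SimpleGraph V} {R W1 W2 : Set V} {u w1 w2 : V}

theorem mem_R_of_adj (hP : IsBarbellPartition G R W1 W2) (hw1 : w1 ∈ W1) (hw2 : w2 ∈ W2)
    (h1 : G.Adj u w1) (h2 : G.Adj u w2) : u ∈ R := by
  obtain ⟨hcover, -, -, -, -, -, hnoedge, -⟩ := hP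
  have hu : u ∈ R ∪ W1 ∪ W2 := hcover ▸ Set.mem_univ u
  rcases hu with (hR | hW1) | hW2
  · exact hR
  · exact absurd h2 (hnoedge u hW1 w2 hw2)
  · exact absurd h1.symm (hnoedge w1 hw1 u hW2)

theorem four_le_encard_neighborSet (hP : IsBarbellPartition G R W1 W2) (hw1 : w1 ∈ W1)
    (hw2 : w2 ∈ W2) (h1 : G.Adj u w1) (h2 : G.Adj u w2) : 4 ≤ (G.neighborSet u).encard := by
  have hu := hP.mem_R_of_adj hw1 hw2 h1 h2
  obtain ⟨-, -, -, hW12, -, -, -, hdeg⟩ := hP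
  have hN1 : 2 ≤ (G.neighborSet u ∩ W1).encard :=
    Set.Nonempty.two_le_encard_of_ncard_ne_one ⟨w1, h1, hw1⟩ (hdeg u hu).1
  have hN2 : 2 ≤ (G.neighborSet u ∩ W2).encard :=
    Set.Nonempty.two_le_encard_of_ncard_ne_one ⟨w2, h2, hw2⟩ (hdeg u hu).2
  calc (4 : ℕ∞) = 2 + 2 := by norm_num
    _ ≤ (G.neighborSet u ∩ W1).encard + (G.neighborSet u ∩ W2).encard := add_le_add hN1 hN2
    _ = (G.neighborSet u ∩ W1 ∪ G.neighborSet u ∩ W2).encard :=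
        (Set.encard_union_eq (hW12.mono Set.inter_subset_right Set.inter_subset_right)).symm
    _ ≤ (G.neighborSet u).encard := Set.encard_le_encard (by simp)

end IsBarbellPartition

theorem SimpleGraph.not_hasBarbellPartition {V : Type*} {G : SimpleGraph V}
    (hdeg : ∀ v, (G.neighborSet v).encard ≤ 3)
    (hcommon : ∀ v w, v ≠ w → ¬ G.Adj v w → ∃ u, G.Adj u v ∧ G.Adj u w) :
    ¬ HasBarbellPartition G := by
  rintro ⟨R, W1, W2, hP⟩
  obtain ⟨-, -, -, hW12, ⟨w1, hw1⟩, ⟨w2, hw2⟩, hnoedge, -⟩ := id hP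
  obtain ⟨u, h1, h2⟩ := hcommon w1 w2 (hW12.ne_of_mem hw1 hw2) (hnoedge w1 hw1 w2 hw2)
  have h4le3 := (hP.four_le_encard_neighborSet hw1 hw2 h1 h2).trans (hdeg u)
  norm_num at h4le3

theorem petersenGraph_encard_neighborSet_le (x : {s : Finset (Fin 5) // s.card = 2}) :
    (petersenGraph.neighborSet x).encard ≤ 3 := by
  have hsub : Subtype.val '' petersenGraph.neighborSet x ⊆ ↑(x.1ᶜ.powersetCard 2) := by
    rintro _ ⟨y, hy, rfl⟩
    simp only [Finset.mem_coe, Finset.mem_powersetCard]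
    exact ⟨Finset.subset_compl_iff_disjoint_right.2 (Disjoint.symm hy), y.2⟩
  calc (petersenGraph.neighborSet x).encard
      = (Subtype.val '' petersenGraph.neighborSet x).encard :=
        (Subtype.val_injective.encard_image _).symm
    _ ≤ (x.1ᶜ.powersetCard 2 : Set (Finset (Fin 5))).encard := Set.encard_le_encard hsub
    _ = 3 := by simp [Set.encard_coe_eq_coe_finsetCard, Finset.card_compl, x.2]

theorem petersenGraph_exists_common_neighbor (x y : {s : Finset (Fin 5) // s.card = 2})
    (hne : x ≠ y) (hxy : ¬ petersenGraph.Adj x y) :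
    ∃ z, petersenGraph.Adj z x ∧ petersenGraph.Adj z y := by
  have hinter : (x.1 ∩ y.1).card = 1 := by
    have hpos : 0 < (x.1 ∩ y.1).card :=
      Finset.card_pos.2 (Finset.not_disjoint_iff_nonempty_inter.1 hxy)
    have hle : (x.1 ∩ y.1).card ≤ 2 :=
      (Finset.card_le_card Finset.inter_subset_left).trans_eq x.2
    have hne2 : (x.1 ∩ y.1).card ≠ 2 := fun h => hne <| Subtype.ext <|
      (Finset.eq_of_subset_of_card_le Finset.inter_subset_left (x.2.trans h.symm).le).symm.trans
        (Finset.eq_of_subset_of_card_le Finset.inter_subset_right (y.2.trans h.symm).le)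
    omega
  have hz : (x.1 ∪ y.1)ᶜ.card = 2 := by
    have := Finset.card_union_add_card_inter x.1 y.1
    rw [Finset.card_compl, Fintype.card_fin]
    omega
  exact ⟨⟨_, hz⟩, Finset.disjoint_left.2 fun a ha hx => by simp_all,
    Finset.disjoint_left.2 fun a ha hy => by simp_all⟩

/-- The Petersen graph does not admit a barbell partition. -/
theorem petersen_no_barbellPartition : ¬ HasBarbellPartition petersenGraph :=
  not_hasBarbellPartition petersenGraph_encard_neighborSet_le petersenGraph_exists_common_neighbor
end

section
/- Let G and H be finite simple graphs with no isolated vertices, and let K = G ∨ H be the join of G and H. Then K admits a barbell partition if and only if G or H admits a barbell partition {R, W1, W2} with |W1| ≥ 2 and |W2| ≥ 2. -/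
/-!
Every vertex of `G` is adjacent to every vertex of `H` in `G ∨ H`, so the two parts `W1, W2` of a
barbell partition, having no edges between them, lie on one side, say in `G`, and pull back to a
barbell partition of `G`. Neither part is a singleton `{w}`: a neighbour of `w` would lie in `R`
and see exactly one vertex of that part. Conversely, a barbell partition of `G` whose parts have
at least two vertices extends to `G ∨ H` by putting all of `H` into `R`, since every vertex of `H`
sees all of `W1` and all of `W2`.
-/

open SimpleGraph

def joinGraph {α β : Type*} (G : SimpleGraph α) (H : SimpleGraph β) :
    SimpleGraph (α ⊕ β) where
  Adj x y :=
    match x, y with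
    | Sum.inl a, Sum.inl b => G.Adj a b
    | Sum.inr a, Sum.inr b => H.Adj a b
    | Sum.inl _, Sum.inr _ => True
    | Sum.inr _, Sum.inl _ => True
  symm := ⟨by
    rintro (a | a) (b | b) h
    · exact h.symm
    · trivial
    · trivial
    · exact h.symm⟩
  loopless := ⟨by
    rintro (a | a) h
    · exact G.irrefl h
    · exact H.irrefl h⟩

namespace SimpleGraph.Embedding

variable {V W : Type*} {G : SimpleGraph V} {K : SimpleGraph W}

theorem neighborSet_inter_image (f : G ↪g K) (v : V) (A : Set V) :
    K.neighborSet (f v) ∩ f '' A = f '' (G.neighborSet v ∩ A) := by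
  ext x
  constructor
  · rintro ⟨hx, a, ha, rfl⟩
    exact ⟨a, ⟨f.map_adj_iff.mp hx, ha⟩, rfl⟩
  · rintro ⟨a, ⟨hva, ha⟩, rfl⟩
    exact ⟨f.map_adj_iff.mpr hva, a, ha, rfl⟩

theorem ncard_neighborSet_inter_image (f : G ↪g K) (v : V) (A : Set V) :
    (K.neighborSet (f v) ∩ f '' A).ncard = (G.neighborSet v ∩ A).ncard := by
  rw [f.neighborSet_inter_image, Set.ncard_image_of_injective _ f.injective]

end SimpleGraph.Embedding

namespace IsBarbellPartition

variable {V W : Type*} {G : SimpleGraph V} {K : SimpleGraph W} {R W1 W2 : Set V}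

theorem nonempty_left (h : IsBarbellPartition G R W1 W2) : W1.Nonempty := h.2.2.2.2.1

theorem symm (h : IsBarbellPartition G R W1 W2) : IsBarbellPartition G R W2 W1 := by
  obtain ⟨hcov, hRW1, hRW2, hW12, hW1, hW2, hedge, hdeg⟩ := h
  refine ⟨?_, hRW2, hRW1, hW12.symm, hW2, hW1, fun w2 h2 w1 h1 hadj ↦ hedge w1 h1 w2 h2 hadj.symm,
    fun v hv ↦ (hdeg v hv).symm⟩
  rwa [Set.union_right_comm]

theorem ncard_left_ne_one (h : IsBarbellPartition G R W1 W2)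
    (hG : ∀ v, (G.neighborSet v).Nonempty) : W1.ncard ≠ 1 := by
  obtain ⟨hcov, -, -, -, -, -, hedge, hdeg⟩ := h
  intro h1
  obtain ⟨w, rfl⟩ := Set.ncard_eq_one.mp h1
  obtain ⟨u, hwu⟩ := hG w
  have huR : u ∈ R := by
    have hu : u ∈ R ∪ {w} ∪ W2 := hcov ▸ Set.mem_univ u
    rcases hu with (hu | hu) | hu
    · exact hu
    · exact absurd (Set.mem_singleton_iff.mp hu ▸ hwu) (G.loopless.irrefl w)
    · exact absurd hwu (hedge w rfl u hu)
  apply (hdeg u huR).1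
  have huw : w ∈ G.neighborSet u := G.adj_symm hwu
  rw [Set.inter_eq_self_of_subset_right (Set.singleton_subset_iff.mpr huw), Set.ncard_singleton]

theorem two_le_ncard_left [Finite V] (h : IsBarbellPartition G R W1 W2)
    (hG : ∀ v, (G.neighborSet v).Nonempty) : 2 ≤ W1.ncard := by
  have hpos := (Set.ncard_pos W1.toFinite).mpr h.nonempty_left
  have hne := h.ncard_left_ne_one hG
  omega

theorem comap {R W1 W2 : Set W} (h : IsBarbellPartition K R W1 W2) (f : G ↪g K)
    (h1 : W1 ⊆ Set.range f) (h2 : W2 ⊆ Set.range f) :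
    IsBarbellPartition G (f ⁻¹' R) (f ⁻¹' W1) (f ⁻¹' W2) := by
  obtain ⟨hcov, hRW1, hRW2, hW12, hW1, hW2, hedge, hdeg⟩ := h
  refine ⟨?_, hRW1.preimage f, hRW2.preimage f, hW12.preimage f, ?_, ?_,
    fun w1 h1 w2 h2 hadj ↦ hedge _ h1 _ h2 (f.map_adj_iff.mpr hadj), fun v hv ↦ ?_⟩
  · rw [← Set.preimage_union, ← Set.preimage_union, hcov, Set.preimage_univ]
  · exact hW1.preimage' h1
  · exact hW2.preimage' h2
  · rw [← f.ncard_neighborSet_inter_image, ← f.ncard_neighborSet_inter_image,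
      Set.image_preimage_eq_of_subset h1, Set.image_preimage_eq_of_subset h2]
    exact hdeg _ hv

theorem comap_iso {R W1 W2 : Set W} (h : IsBarbellPartition K R W1 W2) (e : G ≃g K) :
    IsBarbellPartition G (e ⁻¹' R) (e ⁻¹' W1) (e ⁻¹' W2) :=
  h.comap e.toEmbedding (by simp) (by simp)

end IsBarbellPartition

namespace joinGraph

variable {α β : Type*} (G : SimpleGraph α) (H : SimpleGraph β)

def inl : G ↪g joinGraph G H where
  toEmbedding := Function.Embedding.inl
  map_rel_iff' := Iff.rfl

def comm : joinGraph G H ≃g joinGraph H G where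
  toEquiv := Equiv.sumComm α β
  map_rel_iff' := by rintro (a | b) (c | d) <;> rfl

variable {G H}

theorem neighborSet_inr_inter_image_inl (b : β) (A : Set α) :
    (joinGraph G H).neighborSet (Sum.inr b) ∩ Sum.inl '' A = Sum.inl '' A :=
  Set.inter_eq_right.mpr (by rintro _ ⟨a, -, rfl⟩; trivial)

end joinGraph

namespace IsBarbellPartition

variable {α β : Type*} {G : SimpleGraph α} {H : SimpleGraph β}

theorem joinGraph_left {R W1 W2 : Set α} (h : IsBarbellPartition G R W1 W2)
    (h1 : W1.ncard ≠ 1) (h2 : W2.ncard ≠ 1) :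
    IsBarbellPartition (joinGraph G H) (Sum.inl '' R ∪ Set.range Sum.inr)
      (Sum.inl '' W1) (Sum.inl '' W2) := by
  obtain ⟨hcov, hRW1, hRW2, hW12, hW1, hW2, hedge, hdeg⟩ := h
  have hdisj {A : Set α} (hRA : Disjoint R A) :
      Disjoint (Sum.inl '' R ∪ Set.range Sum.inr) (Sum.inl '' A : Set (α ⊕ β)) :=
    Disjoint.union_left ((Set.disjoint_image_iff Sum.inl_injective).mpr hRA)
      (Set.isCompl_range_inl_range_inr.disjoint.symm.mono_right (Set.image_subset_range _ _))
  refine ⟨?_, hdisj hRW1, hdisj hRW2, (Set.disjoint_image_iff Sum.inl_injective).mpr hW12,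
    hW1.image _, hW2.image _, ?_, ?_⟩
  · rw [← Set.range_inl_union_range_inr, ← Set.image_univ (f := Sum.inl), ← hcov,
      Set.image_union, Set.image_union]
    ac_rfl
  · rintro _ ⟨a1, h1, rfl⟩ _ ⟨a2, h2, rfl⟩
    exact hedge a1 h1 a2 h2
  · rintro _ (⟨a, ha, rfl⟩ | ⟨b, rfl⟩)
    · exact ⟨((joinGraph.inl G H).ncard_neighborSet_inter_image a W1).trans_ne (hdeg a ha).1,
        ((joinGraph.inl G H).ncard_neighborSet_inter_image a W2).trans_ne (hdeg a ha).2⟩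
    · rw [joinGraph.neighborSet_inr_inter_image_inl, joinGraph.neighborSet_inr_inter_image_inl,
        Set.ncard_image_of_injective _ Sum.inl_injective,
        Set.ncard_image_of_injective _ Sum.inl_injective]
      exact ⟨h1, h2⟩

theorem subset_range_inl {R W1 W2 : Set (α ⊕ β)} (h : IsBarbellPartition (joinGraph G H) R W1 W2)
    {a : α} (ha : Sum.inl a ∈ W1) : W1 ⊆ Set.range Sum.inl ∧ W2 ⊆ Set.range Sum.inl := by
  obtain ⟨-, -, -, -, -, ⟨_, hx⟩, hedge, -⟩ := h
  have hW2 : W2 ⊆ Set.range Sum.inl := by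
    rintro (c | b) hb
    · exact ⟨c, rfl⟩
    · exact absurd trivial (hedge _ ha _ hb)
  obtain ⟨c, rfl⟩ := hW2 hx
  refine ⟨?_, hW2⟩
  rintro (c' | b) hb
  · exact ⟨c', rfl⟩
  · exact absurd trivial (hedge _ hb _ hx)

theorem exists_two_le_ncard_of_inl_mem [Finite α] (hG : ∀ a, (G.neighborSet a).Nonempty)
    {R W1 W2 : Set (α ⊕ β)} (h : IsBarbellPartition (joinGraph G H) R W1 W2)
    {a : α} (ha : Sum.inl a ∈ W1) :
    ∃ R W1 W2 : Set α, IsBarbellPartition G R W1 W2 ∧ 2 ≤ W1.ncard ∧ 2 ≤ W2.ncard := by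
  obtain ⟨h1, h2⟩ := h.subset_range_inl ha
  have hG' := h.comap (joinGraph.inl G H) h1 h2
  exact ⟨_, _, _, hG', hG'.two_le_ncard_left hG, hG'.symm.two_le_ncard_left hG⟩

end IsBarbellPartition

/-- For graphs `G, H` with no isolated vertices, the join `G ∨ H` admits a
barbell partition iff `G` or `H` admits a barbell partition whose parts
`W1, W2` each have at least two vertices. -/
theorem joinGraph_hasBarbellPartition_iff {α β : Type*} [Fintype α] [Fintype β]
    (G : SimpleGraph α) (H : SimpleGraph β)
    (hG : ∀ a : α, (G.neighborSet a).Nonempty)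
    (hH : ∀ b : β, (H.neighborSet b).Nonempty) :
    HasBarbellPartition (joinGraph G H) ↔
      ((∃ R W1 W2 : Set α, IsBarbellPartition G R W1 W2 ∧
          2 ≤ W1.ncard ∧ 2 ≤ W2.ncard) ∨
       (∃ R W1 W2 : Set β, IsBarbellPartition H R W1 W2 ∧
          2 ≤ W1.ncard ∧ 2 ≤ W2.ncard)) := by
  constructor
  · rintro ⟨R, W1, W2, h⟩
    obtain ⟨a | b, hx⟩ := h.nonempty_left
    · exact Or.inl (h.exists_two_le_ncard_of_inl_mem hG hx)
    · exact Or.inr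
        ((h.comap_iso (joinGraph.comm H G)).exists_two_le_ncard_of_inl_mem hH (a := b) hx)
  · rintro (⟨R, W1, W2, h, h1, h2⟩ | ⟨R, W1, W2, h, h1, h2⟩)
    · exact ⟨_, _, _, h.joinGraph_left (by omega) (by omega)⟩
    · exact ⟨_, _, _, (h.joinGraph_left (H := G) (by omega) (by omega)).comap_iso
        (joinGraph.comm G H)⟩
end

section
/- Let G be a finite simple graph and F ⊆ V(G) a fort of G. If the closed neighborhood N_G[F] is not a zero forcing set of G, then G admits a barbell partition. -/
open SimpleGraph

/-- The vertices eventually colored by the zero forcing process started from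
`S`: initially the vertices of `S` are colored, and a colored vertex `u` with
exactly one uncolored neighbor `w` forces `w` to become colored. -/
inductive Forced {V : Type*} (G : SimpleGraph V) (S : Set V) : V → Prop
  | init : ∀ v ∈ S, Forced G S v
  | force : ∀ u w, Forced G S u → G.Adj u w →
      (∀ x, G.Adj u x → x ≠ w → Forced G S x) → Forced G S w

/-- `S` is a zero forcing set of `G` if the forcing process started from `S`
colors every vertex. -/
def IsZeroForcingSet {V : Type*} (G : SimpleGraph V) (S : Set V) : Prop :=
  ∀ v : V, Forced G S v

/-- The closed neighborhood of a set `F`. -/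
def closedNbhd {V : Type*} (G : SimpleGraph V) (F : Set V) : Set V :=
  F ∪ {x | ∃ y ∈ F, G.Adj y x}

/-- If `F` is a fort of `G` and the closed neighborhood `N[F]` is not a zero
forcing set of `G`, then `G` admits a barbell partition. -/
theorem barbell_of_closedNbhd_not_zeroForcing {V : Type*} [Fintype V]
    (G : SimpleGraph V) (F : Set V) (hF : IsFort G F)
    (h : ¬ IsZeroForcingSet G (closedNbhd G F)) :
    HasBarbellPartition G := by
  classical
  set S := closedNbhd G F with hS
  set U : Set V := {v | ¬ Forced G S v} with hU
  -- F ⊆ Forced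
  have hFforced : ∀ v ∈ F, Forced G S v := fun v hv =>
    Forced.init v (Or.inl hv)
  have hUne : U.Nonempty := by
    by_contra hc
    apply h
    intro v
    by_contra hv
    exact hc ⟨v, hv⟩
  have hFU : ∀ v ∈ F, v ∉ U := fun v hv hvU => hvU (hFforced v hv)
  -- no edges between F and U
  have hnoedge : ∀ w1 ∈ F, ∀ w2 ∈ U, ¬ G.Adj w1 w2 := by
    intro w1 h1 w2 h2 hadj
    exact h2 (Forced.init w2 (Or.inr ⟨w1, h1, hadj⟩))
  refine ⟨(F ∪ U)ᶜ, F, U, ?_, ?_, ?_, ?_, hF.1, hUne, hnoedge, ?_⟩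
  · rw [Set.union_assoc, Set.compl_union_self]
  · exact Set.disjoint_left.mpr fun v hv hvF => hv (Or.inl hvF)
  · exact Set.disjoint_left.mpr fun v hv hvU => hv (Or.inr hvU)
  · exact Set.disjoint_left.mpr fun v hvF hvU => hFU v hvF hvU
  · intro v hv
    have hvF : v ∉ F := fun hc => hv (Or.inl hc)
    have hvU : v ∉ U := fun hc => hv (Or.inr hc)
    have hvforced : Forced G S v := by
      by_contra hc; exact hvU hc
    refine ⟨hF.2 v hvF, ?_⟩
    intro hone
    obtain ⟨w, hw⟩ := Set.ncard_eq_one.mp hone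
    have hwmem : w ∈ G.neighborSet v ∩ U := hw ▸ rfl
    have hadj : G.Adj v w := hwmem.1
    have hwU : w ∈ U := hwmem.2
    apply hwU
    refine Forced.force v w hvforced hadj ?_
    intro x hx hxw
    by_contra hxU
    have : x ∈ G.neighborSet v ∩ U := ⟨hx, hxU⟩
    rw [hw] at this
    exact hxw this
end

section
/- Let G and H be finite connected simple graphs, neither of which is a path, sharing exactly one common vertex v. Then the vertex sum G ⊕_v H admits a barbell partition. -/
/-!
A vertex `a` lying in every fort of a finite graph is an end of a path: if `deg a ≠ 1` then
`V \ {a}` is a fort, and otherwise every fort of `G - a` contains the unique neighbour `c` of `a`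
(a fort of `G - a` avoiding `c` is already a fort of `G`), so by induction `G - a` is a path
ending at `c`. Hence a graph that is not a path has a fort avoiding any prescribed vertex.
Forts of `G` and `H` avoiding the cut vertex, placed in `G ⊕_v H`, are the parts `W1`, `W2` of a
barbell partition: every other vertex sees `W1` only through `G` and `W2` only through `H`.
-/

open SimpleGraph

/-- The vertex sum `G ⊕_v H`: disjoint copies of `G` and `H` with the vertex
`a` of `G` identified with the vertex `b` of `H` (represented by `Sum.inl a`). -/
def vertexSum {α β : Type*} (G : SimpleGraph α) (H : SimpleGraph β) (a : α) (b : β) :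
    SimpleGraph (α ⊕ {y : β // y ≠ b}) where
  Adj x y :=
    match x, y with
    | Sum.inl u, Sum.inl w => G.Adj u w
    | Sum.inl u, Sum.inr w => u = a ∧ H.Adj b w.1
    | Sum.inr u, Sum.inl w => w = a ∧ H.Adj u.1 b
    | Sum.inr u, Sum.inr w => H.Adj u.1 w.1
  symm := by
    constructor
    rintro (u | u) (w | w) h
    · exact h.symm
    · exact ⟨h.1, h.2.symm⟩
    · exact ⟨h.1, h.2.symm⟩
    · exact h.symm
  loopless := by
    constructor
    rintro (u | u) h
    · exact G.irrefl h
    · exact H.irrefl h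

/-- `G` is a path graph. -/
def IsPathGraph {α : Type*} (G : SimpleGraph α) : Prop :=
  ∃ n : ℕ, Nonempty (G ≃g SimpleGraph.pathGraph n)

section Forts

variable {V W : Type*} {G : SimpleGraph V} {K : SimpleGraph W} {F : Set V}

lemma IsFort.ncard_neighborSet_inter_image_ne_one (hF : IsFort G F) (f : G ↪g K) {x : W}
    (hx : x ∉ f '' F) (hout : x ∉ Set.range f → ∀ u ∈ F, ¬ K.Adj x (f u)) :
    (K.neighborSet x ∩ f '' F).ncard ≠ 1 := by
  by_cases hr : x ∈ Set.range f
  · obtain ⟨u, rfl⟩ := hr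
    have himage : K.neighborSet (f u) ∩ f '' F = f '' (G.neighborSet u ∩ F) := by
      ext y
      constructor
      · rintro ⟨hy, v, hv, rfl⟩
        exact ⟨v, ⟨f.map_adj_iff.mp hy, hv⟩, rfl⟩
      · rintro ⟨v, ⟨hv, hvF⟩, rfl⟩
        exact ⟨f.map_adj_iff.mpr hv, v, hvF, rfl⟩
    rw [himage, Set.ncard_image_of_injective _ f.injective]
    exact hF.2 u fun hu => hx ⟨u, hu, rfl⟩
  · have hempty : K.neighborSet x ∩ f '' F = ∅ :=
      Set.eq_empty_of_forall_notMem fun _ ⟨hy, u, hu, hfu⟩ => hout hr u hu (hfu ▸ hy)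
    simp [hempty]

lemma IsFort.image (hF : IsFort G F) (f : G ↪g K)
    (hout : ∀ x ∉ Set.range f, ∀ u ∈ F, ¬ K.Adj x (f u)) : IsFort K (f '' F) :=
  ⟨hF.1.image f, fun _ hx => hF.ncard_neighborSet_inter_image_ne_one f hx (hout _)⟩

lemma isFort_compl_singleton {a : V} (hne : ({a}ᶜ : Set V).Nonempty)
    (ha : (G.neighborSet a).ncard ≠ 1) : IsFort G {a}ᶜ := by
  refine ⟨hne, fun x hx => ?_⟩
  rw [Set.notMem_compl_iff, Set.mem_singleton_iff] at hx
  subst hx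
  have hN : G.neighborSet x ∩ {x}ᶜ = G.neighborSet x :=
    Set.inter_eq_left.mpr fun _ hy => (G.ne_of_adj hy).symm
  rwa [hN]

end Forts

section PathGraph

variable {V : Type*} {G : SimpleGraph V}

lemma exists_iso_pathGraph_succ_of_induce_compl_singleton {a : V} {n : ℕ}
    (e : G.induce {a}ᶜ ≃g pathGraph n)
    (ha : ∀ x : ({a}ᶜ : Set V), G.Adj a x ↔ (e x : ℕ) = 0) :
    ∃ e' : G ≃g pathGraph (n + 1), e' a = 0 := by
  classical
  -- `optionSubtypeNe a` is stated for `{b // b ≠ a}`, which is `↥{a}ᶜ` only up to defeq.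
  let σ : V ≃ Fin (n + 1) := (Equiv.optionSubtypeNe a).symm.trans
    ((((Equiv.subtypeEquivRight (p := (· ≠ a)) (q := (· ∈ ({a}ᶜ : Set V)))
      fun _ => Iff.rfl).trans e.toEquiv).optionCongr).trans (finSuccEquiv n).symm)
  have hσa : σ a = 0 := by simp [σ]
  have hσ : ∀ x (hx : x ≠ a), σ x = (e ⟨x, hx⟩).succ := by
    intro x hx
    simp only [σ, Equiv.trans_apply, Equiv.optionSubtypeNe_symm_of_ne hx,
      Equiv.optionCongr_apply, Option.map_some, finSuccEquiv_symm_some]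
    rfl
  refine ⟨⟨σ, fun {x y} => ?_⟩, hσa⟩
  simp only [pathGraph_adj]
  by_cases hx : x = a <;> by_cases hy : y = a
  · subst hx hy; simp
  · subst hx
    rw [hσa, hσ y hy, ha ⟨y, hy⟩]
    simp only [Fin.val_zero, Fin.val_succ]
    omega
  · subst hy
    rw [hσa, hσ x hx, G.adj_comm, ha ⟨x, hx⟩]
    simp only [Fin.val_zero, Fin.val_succ]
    omega
  · rw [hσ x hx, hσ y hy]
    have : G.Adj x y ↔ (pathGraph n).Adj (e ⟨x, hx⟩) (e ⟨y, hy⟩) :=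
      (e.map_rel_iff (a := ⟨x, hx⟩) (b := ⟨y, hy⟩)).symm
    rw [this, pathGraph_adj]
    simp only [Fin.val_succ]
    omega

lemma exists_neighborSet_eq_singleton_of_forall_isFort_mem {a : V}
    (hne : ({a}ᶜ : Set V).Nonempty) (h : ∀ F, IsFort G F → a ∈ F) :
    ∃ c, G.neighborSet a = {c} := by
  by_contra! hdeg
  exact Set.notMem_compl_iff.mpr rfl
    (h {a}ᶜ (isFort_compl_singleton hne fun h1 => (Set.ncard_eq_one.mp h1).elim hdeg))

lemma forall_isFort_induce_compl_singleton_mem {a c : V} (hc : G.neighborSet a = {c})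
    (hca : c ∈ ({a}ᶜ : Set V)) (h : ∀ F, IsFort G F → a ∈ F) :
    ∀ F, IsFort (G.induce {a}ᶜ) F → ⟨c, hca⟩ ∈ F := by
  intro F hF
  by_contra hcF
  have hlift : IsFort G (Subtype.val '' F) := by
    refine hF.image (Embedding.induce {a}ᶜ) fun x hx u hu hxu => hcF ?_
    obtain rfl : x = a := by simpa using hx
    obtain rfl : u = ⟨c, hca⟩ := Subtype.ext (by rwa [← Set.mem_singleton_iff, ← hc])
    exact hu
  obtain ⟨x, -, hxa⟩ := h _ hlift
  exact x.2 hxa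

theorem exists_iso_pathGraph_of_forall_isFort_mem [Finite V] (G : SimpleGraph V) (a : V)
    (h : ∀ F, IsFort G F → a ∈ F) :
    ∃ e : G ≃g pathGraph (Nat.card V), (e a : ℕ) = 0 := by
  induction hn : Nat.card V generalizing V with
  | zero => exact absurd hn (Nat.card_pos_iff.mpr ⟨⟨a⟩, inferInstance⟩).ne'
  | succ n ih =>
    have hcard : Nat.card ({a}ᶜ : Set V) = n := by
      classical
      have := Nat.card_congr (Equiv.optionSubtypeNe a)
      rw [Finite.card_option] at this
      exact (by omega : Nat.card {b // b ≠ a} = n)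
    obtain ⟨e, he⟩ : ∃ e : G.induce {a}ᶜ ≃g pathGraph n,
        ∀ x : ({a}ᶜ : Set V), G.Adj a x ↔ (e x : ℕ) = 0 := by
      rcases ({a}ᶜ : Set V).eq_empty_or_nonempty with hempty | hne
      · have : IsEmpty ({a}ᶜ : Set V) := Set.isEmpty_coe_sort.mpr hempty
        obtain rfl : n = 0 := hcard ▸ Nat.card_of_isEmpty
        exact ⟨⟨Equiv.equivOfIsEmpty _ _, fun {x} => isEmptyElim x⟩, isEmptyElim⟩
      · obtain ⟨c, hc⟩ := exists_neighborSet_eq_singleton_of_forall_isFort_mem hne h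
        have hca : c ∈ ({a}ᶜ : Set V) :=
          (G.ne_of_adj (by rw [← G.mem_neighborSet, hc]; rfl)).symm
        obtain ⟨e, he⟩ := ih (G.induce {a}ᶜ) ⟨c, hca⟩
          (forall_isFort_induce_compl_singleton_mem hc hca h) hcard
        refine ⟨e, fun x => ?_⟩
        rw [← he, ← G.mem_neighborSet, hc, Set.mem_singleton_iff, Fin.val_inj,
          e.apply_eq_iff_eq, Subtype.ext_iff]
    obtain ⟨e', he'⟩ := exists_iso_pathGraph_succ_of_induce_compl_singleton e he
    exact ⟨e', by simp [he']⟩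

theorem exists_isFort_notMem_of_not_isPathGraph [Finite V] (hG : ¬ IsPathGraph G) (a : V) :
    ∃ F, IsFort G F ∧ a ∉ F := by
  by_contra! h
  obtain ⟨e, -⟩ := exists_iso_pathGraph_of_forall_isFort_mem G a h
  exact hG ⟨_, ⟨e⟩⟩

end PathGraph

namespace vertexSum

variable {α β : Type*} (G : SimpleGraph α) (H : SimpleGraph β) (a : α) (b : β)

def inlEmbedding : G ↪g vertexSum G H a b where
  toFun := Sum.inl
  inj' := Sum.inl_injective
  map_rel_iff' := Iff.rfl

def inrEmbedding [DecidableEq β] : H ↪g vertexSum G H a b where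
  toFun y := if hy : y = b then Sum.inl a else Sum.inr ⟨y, hy⟩
  inj' := by
    intro y z
    by_cases hy : y = b <;> by_cases hz : z = b <;> simp [hy, hz]
  map_rel_iff' := by
    intro y z
    by_cases hy : y = b <;> by_cases hz : z = b <;> simp [hy, hz, vertexSum]

variable {G H a b}

lemma not_adj_inlEmbedding {x : α ⊕ {y : β // y ≠ b}}
    (hx : x ∉ Set.range (inlEmbedding G H a b)) {u : α} (hu : u ≠ a) :
    ¬ (vertexSum G H a b).Adj x (inlEmbedding G H a b u) := by
  obtain ⟨w, rfl⟩ : ∃ w, x = Sum.inr w := by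
    cases x with
    | inl u => exact absurd ⟨u, rfl⟩ hx
    | inr w => exact ⟨w, rfl⟩
  exact fun hadj => hu hadj.1

variable [DecidableEq β]

lemma inrEmbedding_of_ne {y : β} (hy : y ≠ b) : inrEmbedding G H a b y = Sum.inr ⟨y, hy⟩ :=
  dif_neg hy

lemma not_adj_inrEmbedding {x : α ⊕ {y : β // y ≠ b}}
    (hx : x ∉ Set.range (inrEmbedding G H a b)) {y : β} (hy : y ≠ b) :
    ¬ (vertexSum G H a b).Adj x (inrEmbedding G H a b y) := by
  obtain ⟨u, rfl, hua⟩ : ∃ u, x = Sum.inl u ∧ u ≠ a := by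
    cases x with
    | inl u => exact ⟨u, rfl, fun hua => hx ⟨b, by simp [inrEmbedding, hua]⟩⟩
    | inr w => exact absurd ⟨w, inrEmbedding_of_ne w.2⟩ hx
  rw [inrEmbedding_of_ne hy]
  exact fun hadj => hua hadj.1

theorem isBarbellPartition_of_isFort {FG : Set α} {FH : Set β} (hFG : IsFort G FG)
    (hFH : IsFort H FH) (ha : a ∉ FG) (hb : b ∉ FH) :
    IsBarbellPartition (vertexSum G H a b)
      (inlEmbedding G H a b '' FG ∪ inrEmbedding G H a b '' FH)ᶜ
      (inlEmbedding G H a b '' FG) (inrEmbedding G H a b '' FH) := by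
  have hFG_ne : ∀ u ∈ FG, u ≠ a := fun u hu hua => ha (hua ▸ hu)
  have hFH_ne : ∀ y ∈ FH, y ≠ b := fun y hy hyb => hb (hyb ▸ hy)
  refine ⟨by rw [Set.union_assoc, Set.compl_union_self],
    Set.disjoint_compl_left_iff_subset.mpr Set.subset_union_left,
    Set.disjoint_compl_left_iff_subset.mpr Set.subset_union_right, ?_,
    hFG.1.image _, hFH.1.image _, ?_, fun x hx => ?_⟩
  · rw [Set.disjoint_left]
    rintro _ ⟨u, -, rfl⟩ ⟨y, hy, hyu⟩
    rw [inrEmbedding_of_ne (hFH_ne y hy)] at hyu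
    exact Sum.inr_ne_inl hyu
  · rintro _ ⟨u, hu, rfl⟩ _ ⟨y, hy, rfl⟩ hadj
    rw [inrEmbedding_of_ne (hFH_ne y hy)] at hadj
    exact hFG_ne u hu hadj.1
  · rw [Set.mem_compl_iff, Set.mem_union, not_or] at hx
    exact ⟨hFG.ncard_neighborSet_inter_image_ne_one _ hx.1
        fun hr u hu => not_adj_inlEmbedding hr (hFG_ne u hu),
      hFH.ncard_neighborSet_inter_image_ne_one _ hx.2
        fun hr y hy => not_adj_inrEmbedding hr (hFH_ne y hy)⟩

end vertexSum

theorem vertexSum_hasBarbellPartition_of_not_path_general {α β : Type*} [Fintype α] [Fintype β]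
    (G : SimpleGraph α) (H : SimpleGraph β) (a : α) (b : β)
    (hGp : ¬ IsPathGraph G) (hHp : ¬ IsPathGraph H) :
    HasBarbellPartition (vertexSum G H a b) := by
  classical
  obtain ⟨FG, hFG, ha⟩ := exists_isFort_notMem_of_not_isPathGraph hGp a
  obtain ⟨FH, hFH, hb⟩ := exists_isFort_notMem_of_not_isPathGraph hHp b
  exact ⟨_, _, _, vertexSum.isBarbellPartition_of_isFort hFG hFH ha hb⟩

/-- The vertex sum of two connected graphs, neither of which is a path, admits
a barbell partition. -/
theorem vertexSum_hasBarbellPartition_of_not_path {α β : Type*} [Fintype α] [Fintype β]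
    (G : SimpleGraph α) (H : SimpleGraph β) (a : α) (b : β)
    (hGc : G.Connected) (hHc : H.Connected)
    (hGp : ¬ IsPathGraph G) (hHp : ¬ IsPathGraph H) :
    HasBarbellPartition (vertexSum G H a b) :=
  vertexSum_hasBarbellPartition_of_not_path_general G H a b hGp hHp
end

section
/- Let G be a finite simple graph and H a finite simple graph admitting a barbell partition, sharing exactly one common vertex v. Then the vertex sum K = G ⊕_v H admits a barbell partition. -/
open SimpleGraph

/-! Collapsing all of `G` onto the glued vertex is a surjection `p : G ⊕_v H → H`
(`vertexSumProj`) sending every edge to an edge or to a single vertex. Pulling a barbell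
partition of `H` back along `p` puts all of `G` into the part containing `v`. Through `p`, a
vertex of `H` keeps its neighbours in each part, and so does the glued vertex in the parts
other than its own; every other vertex of `G` has no neighbour outside its part. -/

theorem IsBarbellPartition.comap_s14 {V W : Type*} {K : SimpleGraph V} {H : SimpleGraph W}
    {R W1 W2 : Set W} (hP : IsBarbellPartition H R W1 W2) {f : V → W}
    (hf : Function.Surjective f) (hadj : ∀ ⦃x y⦄, K.Adj x y → f x = f y ∨ H.Adj (f x) (f y))
    (hdeg : ∀ x (S : Set W), f x ∉ S → (K.neighborSet x ∩ f ⁻¹' S).ncard = 0 ∨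
      (K.neighborSet x ∩ f ⁻¹' S).ncard = (H.neighborSet (f x) ∩ S).ncard) :
    IsBarbellPartition K (f ⁻¹' R) (f ⁻¹' W1) (f ⁻¹' W2) := by
  obtain ⟨huniv, hRW1, hRW2, hW12, hW1, hW2, hno, hRdeg⟩ := hP
  have ne_one {x S} (hx : f x ∈ R) (hRS : Disjoint R S)
      (hS : (H.neighborSet (f x) ∩ S).ncard ≠ 1) : (K.neighborSet x ∩ f ⁻¹' S).ncard ≠ 1 := by
    rcases hdeg x S (Set.disjoint_left.mp hRS hx) with h | h <;> rw [h]
    exacts [zero_ne_one, hS]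
  refine ⟨by rw [← Set.preimage_union, ← Set.preimage_union, huniv, Set.preimage_univ],
    hRW1.preimage f, hRW2.preimage f, hW12.preimage f, hW1.preimage hf, hW2.preimage hf,
    fun x hx y hy hxy => ?_,
    fun x hx => ⟨ne_one hx hRW1 (hRdeg _ hx).1, ne_one hx hRW2 (hRdeg _ hx).2⟩⟩
  rcases hadj hxy with h | h
  · exact hW12.ne_of_mem hx hy h
  · exact hno _ hx _ hy h

section VertexSum

variable {α β : Type*} {G : SimpleGraph α} {H : SimpleGraph β} {a : α} {b : β}

@[simp] lemma vertexSum_adj_inl_inr {u : α} {w : {y : β // y ≠ b}} :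
    (vertexSum G H a b).Adj (Sum.inl u) (Sum.inr w) ↔ u = a ∧ H.Adj b w := Iff.rfl

@[simp] lemma vertexSum_adj_inr_inl {u : {y : β // y ≠ b}} {w : α} :
    (vertexSum G H a b).Adj (Sum.inr u) (Sum.inl w) ↔ w = a ∧ H.Adj u b := Iff.rfl

@[simp] lemma vertexSum_adj_inr_inr {u w : {y : β // y ≠ b}} :
    (vertexSum G H a b).Adj (Sum.inr u) (Sum.inr w) ↔ H.Adj u w := Iff.rfl

variable (α) in
def vertexSumProj (b : β) : α ⊕ {y : β // y ≠ b} → β :=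
  Sum.elim (fun _ => b) Subtype.val

@[simp] lemma vertexSumProj_inl (u : α) : vertexSumProj α b (Sum.inl u) = b := rfl

@[simp] lemma vertexSumProj_inr (w : {y : β // y ≠ b}) : vertexSumProj α b (Sum.inr w) = w :=
  rfl

lemma vertexSum_adj_vertexSumProj : ∀ ⦃x y⦄, (vertexSum G H a b).Adj x y →
    vertexSumProj α b x = vertexSumProj α b y ∨
      H.Adj (vertexSumProj α b x) (vertexSumProj α b y)
  | .inl _, .inl _, _ => .inl rfl
  | .inl _, .inr _, h => .inr h.2
  | .inr _, .inl _, h => .inr h.2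
  | .inr _, .inr _, h => .inr h

lemma vertexSum_neighborSet_inl_inter_preimage {u : α} (hu : u ≠ a) {S : Set β} (hb : b ∉ S) :
    (vertexSum G H a b).neighborSet (Sum.inl u) ∩ vertexSumProj α b ⁻¹' S = ∅ := by
  ext (w | v) <;> simp [hb, hu]

section Incl

variable [DecidableEq β]

variable (a b) in
def vertexSumIncl (y : β) : α ⊕ {y : β // y ≠ b} :=
  if h : y = b then Sum.inl a else Sum.inr ⟨y, h⟩

@[simp] lemma vertexSumIncl_eq_inl_iff {y : β} {u : α} :
    vertexSumIncl a b y = Sum.inl u ↔ y = b ∧ a = u := by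
  unfold vertexSumIncl
  split_ifs with h <;> simp [h]

@[simp] lemma vertexSumIncl_eq_inr_iff {y : β} {w : {y : β // y ≠ b}} :
    vertexSumIncl a b y = Sum.inr w ↔ y = w := by
  unfold vertexSumIncl
  split_ifs with h
  · simp [h, w.2.symm]
  · simp [Subtype.ext_iff, eq_comm]

@[simp] lemma vertexSumProj_incl (y : β) : vertexSumProj α b (vertexSumIncl a b y) = y := by
  unfold vertexSumIncl
  split_ifs with h <;> simp [h]

lemma vertexSumIncl_injective : Function.Injective (vertexSumIncl a b) :=
  Function.LeftInverse.injective (g := vertexSumProj α b) vertexSumProj_incl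

lemma vertexSum_neighborSet_inr_inter_preimage (w : {y : β // y ≠ b}) (S : Set β) :
    (vertexSum G H a b).neighborSet (Sum.inr w) ∩ vertexSumProj α b ⁻¹' S =
      vertexSumIncl a b '' (H.neighborSet w ∩ S) := by
  ext (u | v) <;> simp [and_comm, and_left_comm, eq_comm]

lemma vertexSum_neighborSet_inl_self_inter_preimage {S : Set β} (hb : b ∉ S) :
    (vertexSum G H a b).neighborSet (Sum.inl a) ∩ vertexSumProj α b ⁻¹' S =
      vertexSumIncl a b '' (H.neighborSet b ∩ S) := by
  ext (u | v) <;> simp [hb]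

end Incl

lemma vertexSumProj_surjective (a : α) : Function.Surjective (vertexSumProj α b) := by
  classical
  exact fun y => ⟨vertexSumIncl a b y, vertexSumProj_incl y⟩

lemma vertexSum_ncard_neighborSet_inter_preimage (x : α ⊕ {y : β // y ≠ b}) {S : Set β}
    (hx : vertexSumProj α b x ∉ S) :
    ((vertexSum G H a b).neighborSet x ∩ vertexSumProj α b ⁻¹' S).ncard = 0 ∨
      ((vertexSum G H a b).neighborSet x ∩ vertexSumProj α b ⁻¹' S).ncard =
        (H.neighborSet (vertexSumProj α b x) ∩ S).ncard := by
  classical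
  rcases x with u | w
  · rw [vertexSumProj_inl] at hx ⊢
    by_cases hu : u = a
    · subst hu
      right
      rw [vertexSum_neighborSet_inl_self_inter_preimage hx,
        Set.ncard_image_of_injective _ vertexSumIncl_injective]
    · left
      rw [vertexSum_neighborSet_inl_inter_preimage hu hx, Set.ncard_empty]
  · right
    rw [vertexSum_neighborSet_inr_inter_preimage,
      Set.ncard_image_of_injective _ vertexSumIncl_injective, vertexSumProj_inr]

end VertexSum

theorem vertexSum_hasBarbellPartition_general {α β : Type*}
    (G : SimpleGraph α) (H : SimpleGraph β) (a : α) (b : β)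
    (hH : HasBarbellPartition H) :
    HasBarbellPartition (vertexSum G H a b) := by
  obtain ⟨R, W1, W2, hP⟩ := hH
  exact ⟨_, _, _, hP.comap_s14 (vertexSumProj_surjective a) vertexSum_adj_vertexSumProj
    fun x _ => vertexSum_ncard_neighborSet_inter_preimage x⟩

/-- If `H` admits a barbell partition then any vertex sum `G ⊕_v H` admits a
barbell partition. -/
theorem vertexSum_hasBarbellPartition {α β : Type*} [Fintype α] [Fintype β]
    (G : SimpleGraph α) (H : SimpleGraph β) (a : α) (b : β)
    (hH : HasBarbellPartition H) :
    HasBarbellPartition (vertexSum G H a b) :=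
  vertexSum_hasBarbellPartition_general G H a b hH
end

section
/- Let G and H be finite simple graphs each with at least two vertices. Then the corona product G ∘ H admits a barbell partition. -/
open SimpleGraph

/-- The corona product `G ∘ H`: one copy of `G` and, for each vertex `i` of
`G`, a copy of `H` all of whose vertices are joined to `i`. -/
def corona {α β : Type*} (G : SimpleGraph α) (H : SimpleGraph β) :
    SimpleGraph (α ⊕ α × β) where
  Adj x y :=
    match x, y with
    | Sum.inl a, Sum.inl b => G.Adj a b
    | Sum.inl a, Sum.inr p => a = p.1
    | Sum.inr p, Sum.inl a => a = p.1
    | Sum.inr p, Sum.inr q => p.1 = q.1 ∧ H.Adj p.2 q.2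
  symm := by
    constructor
    rintro (a | p) (b | q) h
    · exact h.symm
    · exact h
    · exact h
    · exact ⟨h.1.symm, h.2.symm⟩
  loopless := by
    constructor
    rintro (a | p) h
    · exact G.irrefl h
    · exact H.irrefl h.2

/-!
Each copy of `H` in `G ∘ H` is a fort: a vertex outside the copy over `a` has no neighbour in it,
except `a` itself, which is adjacent to all of its (at least two) vertices. Copies over two distinct
vertices of `G` are disjoint forts with no edges between them, and any two such forts, together
with the rest of the graph, form a barbell partition.
-/

theorem isBarbellPartition_of_isFort {V : Type*} {G : SimpleGraph V} {F₁ F₂ : Set V}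
    (h₁ : IsFort G F₁) (h₂ : IsFort G F₂) (hdisj : Disjoint F₁ F₂)
    (hnadj : ∀ x ∈ F₁, ∀ y ∈ F₂, ¬ G.Adj x y) :
    IsBarbellPartition G (F₁ ∪ F₂)ᶜ F₁ F₂ := by
  refine ⟨by rw [Set.union_assoc, Set.compl_union_self],
    disjoint_compl_left.mono_right Set.subset_union_left,
    disjoint_compl_left.mono_right Set.subset_union_right, hdisj, h₁.1, h₂.1, hnadj, ?_⟩
  intro v hv
  rw [Set.mem_compl_iff, Set.mem_union, not_or] at hv
  exact ⟨h₁.2 v hv.1, h₂.2 v hv.2⟩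

section Corona

variable {α β : Type*} (G : SimpleGraph α) (H : SimpleGraph β)

def coronaFiber (a : α) : Set (α ⊕ α × β) :=
  Set.range fun b : β => Sum.inr (a, b)

theorem ncard_coronaFiber (a : α) : (coronaFiber (β := β) a).ncard = Nat.card β :=
  Set.ncard_range_of_injective fun _ _ h => (Prod.ext_iff.mp (Sum.inr_injective h)).2

theorem neighborSet_inl_inter_coronaFiber_self (a : α) :
    (corona G H).neighborSet (Sum.inl a) ∩ coronaFiber a = coronaFiber a := by
  rw [Set.inter_eq_right]
  rintro _ ⟨b, rfl⟩
  exact rfl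

theorem neighborSet_inter_coronaFiber_eq_empty {v : α ⊕ α × β} {a : α}
    (hv : v ∉ coronaFiber a) (hva : v ≠ Sum.inl a) :
    (corona G H).neighborSet v ∩ coronaFiber a = ∅ := by
  refine Set.eq_empty_of_forall_notMem ?_
  rintro _ ⟨hadj, b, rfl⟩
  rcases v with c | ⟨c, b'⟩
  · exact hva (congrArg Sum.inl hadj)
  · exact hv ⟨b', by rw [show c = a from hadj.1]⟩

theorem isFort_coronaFiber [Nontrivial β] (a : α) : IsFort (corona G H) (coronaFiber a) := by
  refine ⟨⟨_, Classical.arbitrary β, rfl⟩, fun v hv => ?_⟩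
  by_cases hva : v = Sum.inl a
  · subst hva
    rw [neighborSet_inl_inter_coronaFiber_self, ncard_coronaFiber, Ne, Nat.card_eq_one_iff_unique]
    exact fun ⟨h, _⟩ => not_subsingleton β h
  · rw [neighborSet_inter_coronaFiber_eq_empty G H hv hva, Set.ncard_empty]
    exact zero_ne_one

theorem disjoint_coronaFiber {a₁ a₂ : α} (h : a₁ ≠ a₂) :
    Disjoint (coronaFiber (β := β) a₁) (coronaFiber a₂) := by
  rw [Set.disjoint_left]
  rintro _ ⟨b, rfl⟩ ⟨b', hb⟩
  exact h (Prod.ext_iff.mp (Sum.inr_injective hb)).1.symm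

theorem not_adj_coronaFiber {a₁ a₂ : α} (h : a₁ ≠ a₂) :
    ∀ x ∈ coronaFiber a₁, ∀ y ∈ coronaFiber a₂, ¬ (corona G H).Adj x y := by
  rintro _ ⟨b, rfl⟩ _ ⟨b', rfl⟩ hadj
  exact h hadj.1

end Corona

/-- The corona product of two graphs each with at least two vertices admits a
barbell partition. -/
theorem corona_hasBarbellPartition {α β : Type*} [Fintype α] [Fintype β]
    (G : SimpleGraph α) (H : SimpleGraph β)
    (hα : 2 ≤ Fintype.card α) (hβ : 2 ≤ Fintype.card β) :
    HasBarbellPartition (corona G H) := by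
  obtain ⟨a₁, a₂, hne⟩ := Fintype.exists_pair_of_one_lt_card hα
  have : Nontrivial β := Fintype.one_lt_card_iff_nontrivial.mp hβ
  exact ⟨_, _, _, isBarbellPartition_of_isFort (isFort_coronaFiber G H a₁)
    (isFort_coronaFiber G H a₂) (disjoint_coronaFiber hne) (not_adj_coronaFiber G H hne)⟩
end

section
/- Let G be a finite simple graph and H a finite simple graph admitting a barbell partition. Then the Cartesian product G □ H admits a barbell partition; specifically, if {R, W1, W2} is a barbell partition of H, then {V(G) × R, V(G) × W1, V(G) × W2} is a barbell partition of G □ H. -/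
open SimpleGraph

lemma nbr_inter_eq {α β : Type*} (G : SimpleGraph α) (H : SimpleGraph β)
    (R W : Set β) (hdisj : Disjoint R W) (a : α) (r : β) (hr : r ∈ R) :
    ((G.boxProd H).neighborSet (a, r) ∩ (Set.univ ×ˢ W)) =
      (fun x => (a, x)) '' (H.neighborSet r ∩ W) := by
  ext ⟨a', b⟩
  simp only [Set.mem_inter_iff, mem_neighborSet, boxProd_adj, Set.mem_prod,
    Set.mem_univ, true_and, Set.mem_image]
  constructor
  · rintro ⟨⟨hG, hb⟩ | ⟨hH, ha⟩, hbW⟩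
    · exact absurd hr fun h => hdisj.ne_of_mem h hbW hb
    · exact ⟨b, ⟨hH, hbW⟩, by rw [ha]⟩
  · rintro ⟨x, ⟨hx, hxW⟩, heq⟩
    cases heq
    exact ⟨Or.inr ⟨hx, rfl⟩, hxW⟩

/-- If `{R, W1, W2}` is a barbell partition of `H`, then
`{V(G) × R, V(G) × W1, V(G) × W2}` is a barbell partition of the Cartesian
product `G □ H`; in particular `G □ H` admits a barbell partition. -/
theorem boxProd_barbellPartition {α β : Type*} [Fintype α] [Fintype β] [Nonempty α]
    (G : SimpleGraph α) (H : SimpleGraph β) (R W1 W2 : Set β)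
    (h : IsBarbellPartition H R W1 W2) :
    IsBarbellPartition (G.boxProd H)
      (Set.univ ×ˢ R) (Set.univ ×ˢ W1) (Set.univ ×ˢ W2) ∧
    HasBarbellPartition (G.boxProd H) := by
  obtain ⟨hcov, h1, h2, h3, hn1, hn2, hne, hR⟩ := h
  have inj : Function.Injective (fun x : β => ((Classical.arbitrary α), x)) :=
    fun x y hxy => (Prod.mk.injEq _ _ _ _).mp hxy |>.2
  have main : IsBarbellPartition (G.boxProd H)
      (Set.univ ×ˢ R) (Set.univ ×ˢ W1) (Set.univ ×ˢ W2) := by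
    refine ⟨?_, ?_, ?_, ?_, ?_, ?_, ?_, ?_⟩
    · ext ⟨a, b⟩
      simp only [Set.mem_union, Set.mem_prod, Set.mem_univ, true_and, iff_true]
      have : b ∈ R ∪ W1 ∪ W2 := hcov ▸ Set.mem_univ b
      simpa using this
    · exact Set.disjoint_prod.mpr (Or.inr h1)
    · exact Set.disjoint_prod.mpr (Or.inr h2)
    · exact Set.disjoint_prod.mpr (Or.inr h3)
    · exact ⟨(Classical.arbitrary α, hn1.choose), Set.mem_univ _, hn1.choose_spec⟩
    · exact ⟨(Classical.arbitrary α, hn2.choose), Set.mem_univ _, hn2.choose_spec⟩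
    · rintro ⟨a1, b1⟩ ⟨-, hb1⟩ ⟨a2, b2⟩ ⟨-, hb2⟩ hadj
      rcases hadj with ⟨-, hb⟩ | ⟨hH, -⟩
      · exact h3.ne_of_mem hb1 hb2 hb
      · exact hne b1 hb1 b2 hb2 hH
    · rintro ⟨a, r⟩ ⟨-, hr⟩
      have inj2 : Function.Injective (fun x : β => (a, x)) :=
        fun x y hxy => (Prod.mk.injEq _ _ _ _).mp hxy |>.2
      constructor
      · rw [nbr_inter_eq G H R W1 h1 a r hr, Set.ncard_image_of_injective _ inj2]
        exact (hR r hr).1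
      · rw [nbr_inter_eq G H R W2 h2 a r hr, Set.ncard_image_of_injective _ inj2]
        exact (hR r hr).2
  exact ⟨main, _, _, _, main⟩
end

section
/- Let G and H be finite simple graphs each containing a pair of disjoint forts. Then the Cartesian product G □ H admits a barbell partition. -/
open SimpleGraph

lemma fort_prod_count_ne_one {α β : Type*} (G : SimpleGraph α) (H : SimpleGraph β)
    (FG : Set α) (FH : Set β) (hG : IsFort G FG) (hH : IsFort H FH)
    (a : α) (b : β) (hab : (a, b) ∉ FG ×ˢ FH) :
    ((G.boxProd H).neighborSet (a, b) ∩ FG ×ˢ FH).ncard ≠ 1 := by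
  by_cases ha : a ∈ FG
  · have hb : b ∉ FH := fun hb => hab ⟨ha, hb⟩
    have hset : (G.boxProd H).neighborSet (a, b) ∩ FG ×ˢ FH =
        (fun b' => (a, b')) '' (H.neighborSet b ∩ FH) := by
      ext ⟨x, y⟩
      simp only [Set.mem_inter_iff, mem_neighborSet, boxProd_adj, Set.mem_prod,
        Set.mem_image]
      constructor
      · rintro ⟨⟨hadj, heq⟩ | ⟨hadj, heq⟩, hx, hy⟩
        · exact absurd (heq ▸ hy) hb
        · exact ⟨y, ⟨hadj, hy⟩, by rw [heq]⟩
      · rintro ⟨b', ⟨hadj, hb'⟩, heq⟩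
        obtain ⟨rfl, rfl⟩ := Prod.mk.injEq .. ▸ heq
        exact ⟨Or.inr ⟨hadj, rfl⟩, ha, hb'⟩
    rw [hset, Set.ncard_image_of_injective _ (fun x y h => by simpa using h)]
    exact hH.2 b hb
  · by_cases hb : b ∈ FH
    · have hset : (G.boxProd H).neighborSet (a, b) ∩ FG ×ˢ FH =
          (fun a' => (a', b)) '' (G.neighborSet a ∩ FG) := by
        ext ⟨x, y⟩
        simp only [Set.mem_inter_iff, mem_neighborSet, boxProd_adj, Set.mem_prod,
          Set.mem_image]
        constructor
        · rintro ⟨⟨hadj, heq⟩ | ⟨hadj, heq⟩, hx, hy⟩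
          · exact ⟨x, ⟨hadj, hx⟩, by rw [heq]⟩
          · exact absurd (heq ▸ hx) ha
        · rintro ⟨a', ⟨hadj, ha'⟩, heq⟩
          obtain ⟨rfl, rfl⟩ := Prod.mk.injEq .. ▸ heq
          exact ⟨Or.inl ⟨hadj, rfl⟩, ha', hb⟩
      rw [hset, Set.ncard_image_of_injective _ (fun x y h => by simpa using h)]
      exact hG.2 a ha
    · have hset : (G.boxProd H).neighborSet (a, b) ∩ FG ×ˢ FH = ∅ := by
        ext ⟨x, y⟩
        simp only [Set.mem_inter_iff, mem_neighborSet, boxProd_adj, Set.mem_prod,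
          Set.mem_empty_iff_false, iff_false, not_and]
        rintro (⟨hadj, rfl⟩ | ⟨hadj, rfl⟩) hx hy
        · exact hb hy
        · exact ha hx
      rw [hset, Set.ncard_empty]
      exact zero_ne_one

/-- If `G` and `H` each contain a pair of disjoint forts, then the Cartesian
product `G □ H` admits a barbell partition. -/
theorem boxProd_hasBarbellPartition_of_disjoint_forts {α β : Type*}
    [Fintype α] [Fintype β] (G : SimpleGraph α) (H : SimpleGraph β)
    (FG1 FG2 : Set α) (hG1 : IsFort G FG1) (hG2 : IsFort G FG2)
    (hGdis : Disjoint FG1 FG2)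
    (FH1 FH2 : Set β) (hH1 : IsFort H FH1) (hH2 : IsFort H FH2)
    (hHdis : Disjoint FH1 FH2) :
    HasBarbellPartition (G.boxProd H) := by
  set W1 : Set (α × β) := FG1 ×ˢ FH1 with hW1
  set W2 : Set (α × β) := FG2 ×ˢ FH2 with hW2
  refine ⟨(W1 ∪ W2)ᶜ, W1, W2, ?_, ?_, ?_, ?_, ?_, ?_, ?_, ?_⟩
  · rw [Set.union_assoc, Set.compl_union_self]
  · exact Set.disjoint_left.mpr fun x hx h1 => hx (Or.inl h1)
  · exact Set.disjoint_left.mpr fun x hx h2 => hx (Or.inr h2)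
  · exact Set.disjoint_left.mpr fun x h1 h2 => hGdis.le_bot ⟨h1.1, h2.1⟩
  · exact (hG1.1.prod hH1.1)
  · exact (hG2.1.prod hH2.1)
  · rintro ⟨a1, b1⟩ ⟨ha1, hb1⟩ ⟨a2, b2⟩ ⟨ha2, hb2⟩ hadj
    rcases (boxProd_adj).mp hadj with ⟨_, heq⟩ | ⟨_, heq⟩
    · exact hHdis.le_bot ⟨heq ▸ hb1, hb2⟩
    · exact hGdis.le_bot ⟨heq ▸ ha1, ha2⟩
  · rintro ⟨a, b⟩ hr
    have h1 : (a, b) ∉ W1 := fun h => hr (Or.inl h)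
    have h2 : (a, b) ∉ W2 := fun h => hr (Or.inr h)
    exact ⟨fort_prod_count_ne_one G H FG1 FH1 hG1 hH1 a b h1,
      fort_prod_count_ne_one G H FG2 FH2 hG2 hH2 a b h2⟩
end

section
/- Let G be a finite simple graph that is not complete, and let H be a finite simple graph with at least two vertices in which every vertex has degree at least 2 (no pendant or isolated vertices). Then the tensor product G × H admits a barbell partition. -/
open SimpleGraph

/-- The tensor (categorical) product of two graphs. -/
def tensorProd {α β : Type*} (G : SimpleGraph α) (H : SimpleGraph β) :
    SimpleGraph (α × β) where
  Adj x y := G.Adj x.1 y.1 ∧ H.Adj x.2 y.2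
  symm := ⟨fun _ _ h => ⟨h.1.symm, h.2.symm⟩⟩
  loopless := ⟨fun x h => G.loopless.irrefl x.1 h.1⟩

/-!
Pick non-adjacent vertices `u ≠ v` of `G` and take `W1 = {u} × V(H)`, `W2 = {v} × V(H)`.
There are no edges between them, and a vertex `(a, b)` has either no neighbour in the fibre
`{u} × V(H)` (if `a` is not adjacent to `u`) or exactly `deg_H b ≥ 2` of them. So both fibres
are forts, and two disjoint, mutually non-adjacent forts form a barbell partition.
-/

lemma IsFort.isBarbellPartition {V : Type*} {G : SimpleGraph V} {W₁ W₂ : Set V}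
    (h₁ : IsFort G W₁) (h₂ : IsFort G W₂) (hdisj : Disjoint W₁ W₂)
    (hnadj : ∀ w₁ ∈ W₁, ∀ w₂ ∈ W₂, ¬ G.Adj w₁ w₂) :
    IsBarbellPartition G (W₁ ∪ W₂)ᶜ W₁ W₂ := by
  refine ⟨by rw [Set.union_assoc, Set.compl_union_self], ?_, ?_, hdisj, h₁.1, h₂.1, hnadj,
    fun v hv => ⟨h₁.2 v ?_, h₂.2 v ?_⟩⟩
  · exact disjoint_compl_left_iff.mpr Set.subset_union_left
  · exact disjoint_compl_left_iff.mpr Set.subset_union_right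
  · exact fun h => hv (Or.inl h)
  · exact fun h => hv (Or.inr h)

section TensorProd

variable {α β : Type*} (G : SimpleGraph α) (H : SimpleGraph β)

lemma tensorProd_neighborSet_inter_fiber [DecidableRel G.Adj] (a u : α) (b : β) :
    (tensorProd G H).neighborSet (a, b) ∩ Prod.fst ⁻¹' {u} =
      if G.Adj a u then Prod.mk u '' H.neighborSet b else ∅ := by
  ext ⟨x, y⟩
  split_ifs with h
  · simp only [tensorProd, Set.mem_inter_iff, mem_neighborSet, Set.mem_preimage,
      Set.mem_singleton_iff, Set.mem_image, Prod.mk.injEq]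
    constructor
    · rintro ⟨⟨-, hy⟩, rfl⟩
      exact ⟨y, hy, rfl, rfl⟩
    · rintro ⟨y, hy, rfl, rfl⟩
      exact ⟨⟨h, hy⟩, rfl⟩
  · simp only [tensorProd, Set.mem_inter_iff, mem_neighborSet, Set.mem_preimage,
      Set.mem_singleton_iff, Set.mem_empty_iff_false, iff_false]
    rintro ⟨⟨ha, -⟩, rfl⟩
    exact h ha

lemma tensorProd_ncard_neighborSet_inter_fiber [DecidableRel G.Adj] (a u : α) (b : β) :
    ((tensorProd G H).neighborSet (a, b) ∩ Prod.fst ⁻¹' {u}).ncard =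
      if G.Adj a u then (H.neighborSet b).ncard else 0 := by
  rw [tensorProd_neighborSet_inter_fiber]
  split_ifs
  · exact Set.ncard_image_of_injective _ (Prod.mk_right_injective u)
  · exact Set.ncard_empty _

lemma isFort_tensorProd_fiber [Nonempty β] (hH : ∀ b, (H.neighborSet b).ncard ≠ 1) (u : α) :
    IsFort (tensorProd G H) (Prod.fst ⁻¹' {u}) := by
  classical
  obtain ⟨b⟩ := ‹Nonempty β›
  refine ⟨⟨(u, b), rfl⟩, fun ⟨a, b⟩ _ => ?_⟩
  rw [tensorProd_ncard_neighborSet_inter_fiber]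
  split_ifs
  · exact hH b
  · exact zero_ne_one

lemma tensorProd_not_adj_of_mem_fiber {u v : α} (h : ¬ G.Adj u v) :
    ∀ p ∈ Prod.fst ⁻¹' {u}, ∀ q ∈ Prod.fst ⁻¹' {v}, ¬ (tensorProd G H).Adj p q := by
  rintro ⟨_, _⟩ rfl ⟨_, _⟩ rfl hpq
  exact h hpq.1

end TensorProd

theorem tensorProd_hasBarbellPartition_general {α β : Type*} [Fintype β]
    (G : SimpleGraph α) (H : SimpleGraph β)
    (hnc : ¬ ∀ u v : α, u ≠ v → G.Adj u v)
    (hβ : 2 ≤ Fintype.card β)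
    (hdeg : ∀ b : β, 2 ≤ (H.neighborSet b).ncard) :
    HasBarbellPartition (tensorProd G H) := by
  push Not at hnc
  obtain ⟨u, v, huv, hnadj⟩ := hnc
  have : Nonempty β := Fintype.card_pos_iff.mp (by omega)
  have hH : ∀ b, (H.neighborSet b).ncard ≠ 1 := fun b => by have := hdeg b; omega
  exact ⟨_, _, _, (isFort_tensorProd_fiber G H hH u).isBarbellPartition
    (isFort_tensorProd_fiber G H hH v) ((Set.disjoint_singleton.mpr huv).preimage Prod.fst)
    (tensorProd_not_adj_of_mem_fiber G H hnadj)⟩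

/-- If `G` is not complete and `H` has at least two vertices, all of degree at
least 2, then the tensor product `G × H` admits a barbell partition. -/
theorem tensorProd_hasBarbellPartition {α β : Type*} [Fintype α] [Fintype β]
    (G : SimpleGraph α) (H : SimpleGraph β)
    (hnc : ¬ ∀ u v : α, u ≠ v → G.Adj u v)
    (hβ : 2 ≤ Fintype.card β)
    (hdeg : ∀ b : β, 2 ≤ (H.neighborSet b).ncard) :
    HasBarbellPartition (tensorProd G H) :=
  tensorProd_hasBarbellPartition_general G H hnc hβ hdeg
end

section
/- Let G be a finite simple graph that is not complete and let H be a finite simple graph with at least two vertices. Then the strong product G ⊠ H admits a barbell partition. -/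
open SimpleGraph

/-- The strong product of two graphs. -/
def strongProd {α β : Type*} (G : SimpleGraph α) (H : SimpleGraph β) :
    SimpleGraph (α × β) where
  Adj x y := x ≠ y ∧ (x.1 = y.1 ∨ G.Adj x.1 y.1) ∧ (x.2 = y.2 ∨ H.Adj x.2 y.2)
  symm := ⟨by
    rintro x y ⟨hne, h1, h2⟩
    exact ⟨hne.symm, h1.imp Eq.symm (fun h => h.symm), h2.imp Eq.symm (fun h => h.symm)⟩⟩
  loopless := ⟨fun x h => h.1 rfl⟩

/-! Two disjoint forts with no edges between them are the two bells of a barbell partition.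
If `H` has an isolated vertex `b₀`, the layer `G × {b₀}` and its complement are unions of
components of `G ⊠ H`, hence such forts. Otherwise take non-adjacent `u ≠ v` in `G`: the
fibres `{u} × H` and `{v} × H` are forts, since a vertex `(a, b)` adjacent to some `(u, b)`
is also adjacent to `(u, b')` for any neighbour `b'` of `b`. -/

section Forts

variable {V : Type*} {K : SimpleGraph V}

theorem Set.ncard_ne_one_of_mem_of_mem {s : Set V} {x y : V} (hx : x ∈ s) (hy : y ∈ s)
    (hxy : x ≠ y) : s.ncard ≠ 1 := by
  rw [Ne, Set.ncard_eq_one]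
  rintro ⟨z, rfl⟩
  exact hxy (hx.trans hy.symm)

theorem IsFort.isBarbellPartition_s19 {F₁ F₂ : Set V} (h₁ : IsFort K F₁) (h₂ : IsFort K F₂)
    (hdisj : Disjoint F₁ F₂) (hnadj : ∀ x ∈ F₁, ∀ y ∈ F₂, ¬ K.Adj x y) :
    IsBarbellPartition K (F₁ ∪ F₂)ᶜ F₁ F₂ := by
  refine ⟨by rw [Set.union_assoc, Set.compl_union_self],
    disjoint_compl_left.mono_right Set.subset_union_left,
    disjoint_compl_left.mono_right Set.subset_union_right, hdisj, h₁.1, h₂.1, hnadj,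
    fun v hv => ⟨h₁.2 v fun h => hv (.inl h), h₂.2 v fun h => hv (.inr h)⟩⟩

theorem hasBarbellPartition_of_isFort {F₁ F₂ : Set V} (h₁ : IsFort K F₁) (h₂ : IsFort K F₂)
    (hdisj : Disjoint F₁ F₂) (hnadj : ∀ x ∈ F₁, ∀ y ∈ F₂, ¬ K.Adj x y) :
    HasBarbellPartition K :=
  ⟨_, _, _, h₁.isBarbellPartition_s19 h₂ hdisj hnadj⟩

theorem isFort_of_forall_adj_mem {F : Set V} (hF : F.Nonempty)
    (hclosed : ∀ x ∈ F, ∀ y, K.Adj x y → y ∈ F) : IsFort K F := by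
  refine ⟨hF, fun v hv => ?_⟩
  have hempty : K.neighborSet v ∩ F = ∅ :=
    Set.eq_empty_of_forall_notMem fun y ⟨hvy, hy⟩ => hv (hclosed y hy v hvy.symm)
  simp [hempty]

theorem hasBarbellPartition_of_forall_adj_mem {F : Set V} (hF : F.Nonempty)
    (hFc : Fᶜ.Nonempty) (hclosed : ∀ x ∈ F, ∀ y, K.Adj x y → y ∈ F) :
    HasBarbellPartition K := by
  have hclosedc : ∀ x ∈ Fᶜ, ∀ y, K.Adj x y → y ∈ Fᶜ :=
    fun x hx y hxy hy => hx (hclosed y hy x hxy.symm)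
  exact hasBarbellPartition_of_isFort (isFort_of_forall_adj_mem hF hclosed)
    (isFort_of_forall_adj_mem hFc hclosedc) disjoint_compl_right
    fun x hx y hy hxy => hy (hclosed x hx y hxy)

end Forts

section StrongProd

variable {α β : Type*} {G : SimpleGraph α} {H : SimpleGraph β}

@[simp]
theorem strongProd_adj {x y : α × β} :
    (strongProd G H).Adj x y ↔
      x ≠ y ∧ (x.1 = y.1 ∨ G.Adj x.1 y.1) ∧ (x.2 = y.2 ∨ H.Adj x.2 y.2) :=
  Iff.rfl

theorem isFort_strongProd_prod_univ [Nonempty β] {F : Set α} (hF : F.Nonempty)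
    (hH : ∀ b, ∃ b', H.Adj b b') : IsFort (strongProd G H) (F ×ˢ Set.univ) := by
  refine ⟨hF.prod Set.univ_nonempty, ?_⟩
  rintro ⟨a, b⟩ hab
  have ha : a ∉ F := by simpa using hab
  by_cases hadj : ∃ a' ∈ F, G.Adj a a'
  · obtain ⟨a', ha', haa'⟩ := hadj
    obtain ⟨b', hbb'⟩ := hH b
    refine Set.ncard_ne_one_of_mem_of_mem (x := (a', b)) (y := (a', b')) ?_ ?_ ?_
    · exact ⟨by simp [haa', haa'.ne], ha', trivial⟩
    · exact ⟨by simp [haa', haa'.ne, hbb'], ha', trivial⟩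
    · simpa using hbb'.ne
  · push Not at hadj
    have hempty : (strongProd G H).neighborSet (a, b) ∩ F ×ˢ Set.univ = ∅ := by
      refine Set.eq_empty_of_forall_notMem ?_
      rintro ⟨x, y⟩ ⟨⟨-, hax | hax, -⟩, hx, -⟩
      exacts [ha (by rwa [show a = x from hax]), hadj x hx hax]
    simp [hempty]

end StrongProd

theorem strongProd_hasBarbellPartition_general {α β : Type*} [Fintype β]
    (G : SimpleGraph α) (H : SimpleGraph β)
    (hnc : ¬ ∀ u v : α, u ≠ v → G.Adj u v)
    (hβ : 2 ≤ Fintype.card β) :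
    HasBarbellPartition (strongProd G H) := by
  push Not at hnc
  obtain ⟨u, v, huv, hGuv⟩ := hnc
  by_cases hH : ∀ b, ∃ b', H.Adj b b'
  · have : Nonempty β := Fintype.card_pos_iff.mp (by omega)
    refine hasBarbellPartition_of_isFort (isFort_strongProd_prod_univ
      (Set.singleton_nonempty u) hH) (isFort_strongProd_prod_univ (Set.singleton_nonempty v) hH)
      (by simpa using huv) ?_
    rintro ⟨a, b⟩ ⟨rfl, -⟩ ⟨c, d⟩ ⟨rfl, -⟩ ⟨-, hac | hac, -⟩
    exacts [huv hac, hGuv hac]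
  · push Not at hH
    obtain ⟨b₀, hb₀⟩ := hH
    obtain ⟨b₁, hb₁⟩ := Fintype.exists_ne_of_one_lt_card hβ b₀
    refine hasBarbellPartition_of_forall_adj_mem (F := {p | p.2 = b₀}) ⟨(u, b₀), rfl⟩
      ⟨(u, b₁), hb₁⟩ ?_
    rintro ⟨a, b⟩ rfl ⟨c, d⟩ ⟨-, -, hbd | hbd⟩
    exacts [hbd.symm, (hb₀ d hbd).elim]

/-- If `G` is not complete and `H` has at least two vertices, then the strong
product `G ⊠ H` admits a barbell partition. -/
theorem strongProd_hasBarbellPartition {α β : Type*} [Fintype α] [Fintype β]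
    (G : SimpleGraph α) (H : SimpleGraph β)
    (hnc : ¬ ∀ u v : α, u ≠ v → G.Adj u v)
    (hβ : 2 ≤ Fintype.card β) :
    HasBarbellPartition (strongProd G H) :=
  strongProd_hasBarbellPartition_general G H hnc hβ
end
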